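/- Let K' be a complete non-archimedean field, I = [α, β] ⊆ (0,1) a closed interval with α < β, and a = Σ_{n∈ℤ} aₙ tⁿ a nonzero Laurent series convergent on the annulus {α ≤ |t| ≤ β} with coefficients aₙ ∈ K', so that sup_n |aₙ|αⁿ < ∞ and sup_n |aₙ|βⁿ < ∞. Define A = {n ≤ 0 : |aₙ|αⁿ = max(sup_{m≤0}|aₘ|αᵐ, sup_{m≥0}|aₘ|βᵐ)} and assume A is nonempty with maximal element n₀. Then there exists a closed subinterval I' = [α', β'] ⊆ I of positive length such that |aₙ|ρⁿ < |a_{n₀}|ρ^{n₀} for all n ≠ n₀ and all ρ ∈ I'; consequently a = a_{n₀} t^{n₀}(1 + f) with |f|_ρ < 1 for ρ ∈ I', so a is invertible on the annulus {|t| ∈ I'} and |a|_ρ = |a_{n₀}|ρ^{n₀} for ρ ∈ I'. -/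

import Mathlib

/-!
Write `fₙ(ρ) = ‖aₙ‖ρⁿ`, so that `M = f_{n₀}(α)` bounds every `fₙ(α)`
with `n ≤ 0` and every `fₙ(β)` with `n ≥ 0`. Moving `ρ` slightly to the right of `α` makes the
term `n₀` win against all other terms: the terms with `n < n₀` lose at every `ρ > α`, since
`fₙ(ρ)/f_{n₀}(ρ) = (fₙ(α)/M) (ρ/α)^{n-n₀}`; the finitely many terms with `n₀ < n ≤ 0` are
already strictly smaller at `α`, hence near `α` by continuity; and all terms with `n > 0` are
bounded by `M ρ/β`, which is strictly below `f_{n₀}` near `α`.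
-/

open Filter Topology Set

theorem exists_Icc_subset_of_eventually_nhdsGT {X : Type*} [LinearOrder X] [TopologicalSpace X]
    [OrderTopology X] [DenselyOrdered X] [NoMaxOrder X] {α β : X} {P : X → Prop}
    (hαβ : α < β) (hP : ∀ᶠ ρ in 𝓝[>] α, P ρ) :
    ∃ α' β', α < α' ∧ α' < β' ∧ β' ≤ β ∧ ∀ ρ ∈ Icc α' β', P ρ := by
  obtain ⟨u, hαu, hu⟩ := mem_nhdsGT_iff_exists_Ioo_subset.1 hP
  obtain ⟨β', hαβ', hβ'⟩ := exists_between (lt_min hαu hαβ)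
  obtain ⟨α', hαα', hα'β'⟩ := exists_between hαβ'
  refine ⟨α', β', hαα', hα'β', hβ'.le.trans (min_le_right _ _), fun ρ hρ => hu ⟨?_, ?_⟩⟩
  · exact hαα'.trans_le hρ.1
  · exact hρ.2.trans_lt (hβ'.trans_le (min_le_left _ _))

section Monomials

variable {c d α ρ : ℝ} {m k : ℤ}

theorem mul_zpow_eq_mul_zpow_mul_div_zpow (hα : α ≠ 0) :
    c * ρ ^ m = c * α ^ m * (ρ / α) ^ m := by
  rw [div_zpow, mul_assoc, mul_div_cancel₀ _ (zpow_ne_zero m hα)]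

theorem mul_zpow_lt_mul_zpow_of_lt (hα : 0 < α) (hαρ : α < ρ) (hmk : m < k)
    (hd : 0 < d * α ^ k) (hcd : c * α ^ m ≤ d * α ^ k) : c * ρ ^ m < d * ρ ^ k := by
  have hρ : 0 < ρ := hα.trans hαρ
  rw [mul_zpow_eq_mul_zpow_mul_div_zpow hα.ne', mul_zpow_eq_mul_zpow_mul_div_zpow hα.ne' (ρ := ρ)]
  calc c * α ^ m * (ρ / α) ^ m ≤ d * α ^ k * (ρ / α) ^ m := by gcongr
    _ < d * α ^ k * (ρ / α) ^ k :=
      mul_lt_mul_of_pos_left (zpow_lt_zpow_right₀ ((one_lt_div hα).2 hαρ) hmk) hd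

theorem mul_zpow_le_mul_div_of_pos {β M : ℝ} (hρ : 0 < ρ) (hρβ : ρ ≤ β) (hm : 0 < m)
    (hM : 0 ≤ M) (hcM : c * β ^ m ≤ M) : c * ρ ^ m ≤ M * (ρ / β) := by
  have hβ : 0 < β := hρ.trans_le hρβ
  rw [mul_zpow_eq_mul_zpow_mul_div_zpow hβ.ne']
  calc c * β ^ m * (ρ / β) ^ m ≤ M * (ρ / β) ^ m := by gcongr
    _ ≤ M * (ρ / β) ^ (1 : ℤ) := mul_le_mul_of_nonneg_left
      (zpow_le_zpow_right_of_le_one₀ (by positivity) ((div_le_one hβ).2 hρβ) hm) hM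
    _ = M * (ρ / β) := by rw [zpow_one]

end Monomials

theorem eventually_nhdsGT_mul_zpow_lt_mul_zpow (c : ℤ → ℝ) {α β : ℝ} (hα : 0 < α) (hαβ : α < β)
    {n₀ : ℤ} (hn₀ : n₀ ≤ 0) (hM : 0 < c n₀ * α ^ n₀)
    (hmax1 : ∀ n : ℤ, n ≤ 0 → c n * α ^ n ≤ c n₀ * α ^ n₀)
    (hmax2 : ∀ n : ℤ, 0 ≤ n → c n * β ^ n ≤ c n₀ * α ^ n₀)
    (hmaxelt : ∀ n : ℤ, n ≤ 0 → n₀ < n → c n * α ^ n < c n₀ * α ^ n₀) :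
    ∀ᶠ ρ in 𝓝[>] α, ∀ n, n ≠ n₀ → c n * ρ ^ n < c n₀ * ρ ^ n₀ := by
  have hcont (n : ℤ) : ContinuousAt (fun ρ => c n * ρ ^ n) α :=
    (continuousAt_zpow₀ α n (.inl hα.ne')).const_mul (c n)
  have hmiddle : ∀ᶠ ρ in 𝓝 α, ∀ n ∈ Finset.Ioc n₀ 0, c n * ρ ^ n < c n₀ * ρ ^ n₀ :=
    (eventually_all_finset _).2 fun n hn =>
      (hcont n).eventually_lt (hcont n₀) (hmaxelt n (Finset.mem_Ioc.1 hn).2 (Finset.mem_Ioc.1 hn).1)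
  have hpos : ∀ᶠ ρ in 𝓝 α, c n₀ * α ^ n₀ * (ρ / β) < c n₀ * ρ ^ n₀ := by
    refine (continuousAt_const.mul (continuousAt_id.div_const β)).eventually_lt (hcont n₀) ?_
    exact mul_lt_of_lt_one_right hM ((div_lt_one (hα.trans hαβ)).2 hαβ)
  filter_upwards [self_mem_nhdsWithin, Ioo_mem_nhdsGT hαβ, nhdsWithin_le_nhds hmiddle,
    nhdsWithin_le_nhds hpos] with ρ hαρ hρβ hρ_middle hρ_pos n hn
  rcases lt_or_gt_of_ne hn with hlt | hgt
  · exact mul_zpow_lt_mul_zpow_of_lt hα hαρ hlt hM (hmax1 n (by omega))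
  · rcases le_or_gt n 0 with hle | hpos
    · exact hρ_middle n (Finset.mem_Ioc.2 ⟨hgt, hle⟩)
    · exact (mul_zpow_le_mul_div_of_pos (hα.trans hαρ) hρβ.2.le hpos hM.le
        (hmax2 n hpos.le)).trans_lt hρ_pos

theorem stmt8_general (K' : Type*) [NormedField K']
    (α β : ℝ) (hα : 0 < α) (hαβ : α < β)
    (a : ℤ → K') (hne : ∃ n, a n ≠ 0)
    (n₀ : ℤ) (hn₀ : n₀ ≤ 0)
    (hmax1 : ∀ n : ℤ, n ≤ 0 → ‖a n‖ * α ^ n ≤ ‖a n₀‖ * α ^ n₀)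
    (hmax2 : ∀ n : ℤ, 0 ≤ n → ‖a n‖ * β ^ n ≤ ‖a n₀‖ * α ^ n₀)
    (hmaxelt : ∀ n : ℤ, n ≤ 0 → n₀ < n → ‖a n‖ * α ^ n < ‖a n₀‖ * α ^ n₀) :
    a n₀ ≠ 0 ∧
    ∃ α' β' : ℝ, α ≤ α' ∧ α' < β' ∧ β' ≤ β ∧
      (∀ ρ ∈ Set.Icc α' β', ∀ n : ℤ, n ≠ n₀ → ‖a n‖ * ρ ^ n < ‖a n₀‖ * ρ ^ n₀) ∧
      (∀ ρ ∈ Set.Icc α' β', (⨆ n : ℤ, ‖a n‖ * ρ ^ n) = ‖a n₀‖ * ρ ^ n₀) := by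
  have hM : 0 < ‖a n₀‖ * α ^ n₀ := by
    obtain ⟨n, hn⟩ := hne
    rcases le_total n 0 with hle | hge
    · exact (mul_pos (norm_pos_iff.2 hn) (zpow_pos hα n)).trans_le (hmax1 n hle)
    · exact (mul_pos (norm_pos_iff.2 hn) (zpow_pos (hα.trans hαβ) n)).trans_le (hmax2 n hge)
  have han₀ : a n₀ ≠ 0 := fun h => by simp [h] at hM
  obtain ⟨α', β', hαα', hα'β', hβ'β, hdom⟩ := exists_Icc_subset_of_eventually_nhdsGT hαβ
    (eventually_nhdsGT_mul_zpow_lt_mul_zpow (‖a ·‖) hα hαβ hn₀ hM hmax1 hmax2 hmaxelt)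
  refine ⟨han₀, α', β', hαα'.le, hα'β', hβ'β, hdom, fun ρ hρ => ?_⟩
  refine ciSup_eq_of_forall_le_of_forall_lt_exists_gt (fun n => ?_) fun w hw => ⟨n₀, hw⟩
  rcases eq_or_ne n n₀ with rfl | hn
  · exact le_rfl
  · exact (hdom ρ hρ n hn).le

/-- key claim of Lemma 2.5. Let `a = Σ aₙ tⁿ` be a nonzero Laurent series
over a complete non-archimedean field, convergent on the closed annulus of radii
`[α, β] ⊆ (0,1)` (so `‖aₙ‖αⁿ → 0` as `n → -∞` and `‖aₙ‖βⁿ → 0` as `n → +∞`, and the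
Gauss norms at `α`, `β` are bounded by the supremum norm `M = ‖a_{n₀}‖α^{n₀}`), and let
`n₀ ≤ 0` be the maximal index with `‖a_{n₀}‖α^{n₀} = M`. Then on some subinterval
`[α',β'] ⊆ [α,β]` of positive length, the term `n₀` strictly dominates all others;
consequently `a_{n₀} ≠ 0` and the `ρ`-Gauss norm of `a` equals `‖a_{n₀}‖ρ^{n₀}` there. -/
theorem stmt8 (K' : Type*) [NormedField K'] [IsUltrametricDist K'] [CompleteSpace K']
    (α β : ℝ) (hα : 0 < α) (hαβ : α < β) (hβ : β < 1)
    (a : ℤ → K') (hne : ∃ n, a n ≠ 0)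
    (hconv_neg : Filter.Tendsto (fun n : ℕ => ‖a (-(n : ℤ))‖ * α ^ (-(n : ℤ)))
      Filter.atTop (nhds 0))
    (hconv_pos : Filter.Tendsto (fun n : ℕ => ‖a (n : ℤ)‖ * β ^ (n : ℤ))
      Filter.atTop (nhds 0))
    (n₀ : ℤ) (hn₀ : n₀ ≤ 0)
    (hmax1 : ∀ n : ℤ, n ≤ 0 → ‖a n‖ * α ^ n ≤ ‖a n₀‖ * α ^ n₀)
    (hmax2 : ∀ n : ℤ, 0 ≤ n → ‖a n‖ * β ^ n ≤ ‖a n₀‖ * α ^ n₀)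
    (hmaxelt : ∀ n : ℤ, n ≤ 0 → n₀ < n → ‖a n‖ * α ^ n < ‖a n₀‖ * α ^ n₀) :
    a n₀ ≠ 0 ∧
    ∃ α' β' : ℝ, α ≤ α' ∧ α' < β' ∧ β' ≤ β ∧
      (∀ ρ ∈ Set.Icc α' β', ∀ n : ℤ, n ≠ n₀ → ‖a n‖ * ρ ^ n < ‖a n₀‖ * ρ ^ n₀) ∧
      (∀ ρ ∈ Set.Icc α' β', (⨆ n : ℤ, ‖a n‖ * ρ ^ n) = ‖a n₀‖ * ρ ^ n₀) :=
  stmt8_general K' α β hα hαβ a hne n₀ hn₀ hmax1 hmax2 hmaxelt
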